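/- arXiv:2212.04893 — 3 statements merged into one kernel-verified Lean document; each statement's English description precedes it below -/
import Mathlib

section
/- Let Δφ > 0 and let g : (0,1) × (0,1) → ℝ be nonnegative, nondecreasing in each of its two arguments, and satisfy the crossing equation g(z, z̄) = (z z̄ / ((1−z)(1−z̄)))^{Δφ} · g(1−z, 1−z̄) for all z, z̄ ∈ (0,1). Fix z₀ ∈ (0,1) and set B := max( g(z₀, z₀), (z₀/(1−z₀))^{Δφ} · g(1−z₀, 1−z₀) ). Then for all z̄ ∈ (0,1) one has g(z₀, z̄) ≤ B / (1−z̄)^{Δφ}. -/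
open Set

/-- If `g` is nonnegative and nondecreasing in each argument on `(0,1)²`
and satisfies the crossing equation, then `g(z₀, z̄) ≤ B / (1 - z̄)^Δφ` with
`B = max(g(z₀,z₀), (z₀/(1-z₀))^Δφ g(1-z₀,1-z₀))`. -/
theorem stmt1 (Δφ : ℝ) (hΔ : 0 < Δφ) (g : ℝ → ℝ → ℝ)
    (hnonneg : ∀ z zb : ℝ, z ∈ Ioo (0:ℝ) 1 → zb ∈ Ioo (0:ℝ) 1 → 0 ≤ g z zb)
    (hmono₁ : ∀ z z' zb : ℝ, z ∈ Ioo (0:ℝ) 1 → z' ∈ Ioo (0:ℝ) 1 → zb ∈ Ioo (0:ℝ) 1 →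
      z ≤ z' → g z zb ≤ g z' zb)
    (hmono₂ : ∀ z zb zb' : ℝ, z ∈ Ioo (0:ℝ) 1 → zb ∈ Ioo (0:ℝ) 1 → zb' ∈ Ioo (0:ℝ) 1 →
      zb ≤ zb' → g z zb ≤ g z zb')
    (hcross : ∀ z zb : ℝ, z ∈ Ioo (0:ℝ) 1 → zb ∈ Ioo (0:ℝ) 1 →
      g z zb = (z * zb / ((1 - z) * (1 - zb))) ^ Δφ * g (1 - z) (1 - zb))
    (z₀ : ℝ) (hz₀ : z₀ ∈ Ioo (0:ℝ) 1) :
    ∀ zb : ℝ, zb ∈ Ioo (0:ℝ) 1 →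
      g z₀ zb ≤
        max (g z₀ z₀) ((z₀ / (1 - z₀)) ^ Δφ * g (1 - z₀) (1 - z₀)) / (1 - zb) ^ Δφ := by
  intro zb hzb
  obtain ⟨hz₀0, hz₀1⟩ := hz₀
  obtain ⟨hzb0, hzb1⟩ := hzb
  have h1zb : (0:ℝ) < 1 - zb := by linarith
  have h1z₀ : (0:ℝ) < 1 - z₀ := by linarith
  have hz₀' : z₀ ∈ Ioo (0:ℝ) 1 := ⟨hz₀0, hz₀1⟩
  have hzb' : zb ∈ Ioo (0:ℝ) 1 := ⟨hzb0, hzb1⟩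
  have h1z₀' : (1 - z₀) ∈ Ioo (0:ℝ) 1 := ⟨h1z₀, by linarith⟩
  have h1zb' : (1 - zb) ∈ Ioo (0:ℝ) 1 := ⟨h1zb, by linarith⟩
  have hpow : (0:ℝ) < (1 - zb) ^ Δφ := Real.rpow_pos_of_pos h1zb _
  rw [le_div_iff₀ hpow]
  rcases le_or_gt zb z₀ with hle | hlt
  · have h1 : g z₀ zb ≤ g z₀ z₀ := hmono₂ _ _ _ hz₀' hzb' hz₀' hle
    have h2 : g z₀ zb * (1 - zb) ^ Δφ ≤ g z₀ z₀ * 1 := by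
      apply mul_le_mul h1 _ hpow.le (hnonneg _ _ hz₀' hz₀')
      exact Real.rpow_le_one h1zb.le (by linarith) hΔ.le
    calc g z₀ zb * (1 - zb) ^ Δφ ≤ g z₀ z₀ * 1 := h2
      _ = g z₀ z₀ := mul_one _
      _ ≤ _ := le_max_left _ _
  · have hcr := hcross z₀ zb hz₀' hzb'
    have hg1 : g (1 - z₀) (1 - zb) ≤ g (1 - z₀) (1 - z₀) :=
      hmono₂ _ _ _ h1z₀' h1zb' h1z₀' (by linarith)
    have hgnn : 0 ≤ g (1 - z₀) (1 - zb) := hnonneg _ _ h1z₀' h1zb'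
    have key : (z₀ * zb / ((1 - z₀) * (1 - zb))) ^ Δφ * (1 - zb) ^ Δφ
        ≤ (z₀ / (1 - z₀)) ^ Δφ := by
      rw [← Real.mul_rpow (by positivity) h1zb.le]
      apply Real.rpow_le_rpow (by positivity) _ hΔ.le
      rw [div_mul_eq_mul_div, div_le_div_iff₀ (by positivity) h1z₀]
      nlinarith [mul_nonneg (mul_nonneg (mul_nonneg hz₀0.le h1z₀.le) h1zb.le) h1zb.le]
    calc g z₀ zb * (1 - zb) ^ Δφ
        = (z₀ * zb / ((1 - z₀) * (1 - zb))) ^ Δφ * g (1 - z₀) (1 - zb) * (1 - zb) ^ Δφ := by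
          rw [hcr]
      _ = (z₀ * zb / ((1 - z₀) * (1 - zb))) ^ Δφ * (1 - zb) ^ Δφ * g (1 - z₀) (1 - zb) := by
          ring
      _ ≤ (z₀ / (1 - z₀)) ^ Δφ * g (1 - z₀) (1 - z₀) := by
          apply mul_le_mul key hg1 hgnn (by positivity)
      _ ≤ _ := le_max_right _ _
end

section
/- Under the conformal-block-expansion setup below, for every τ* ≥ 0 and every z₀ ∈ (0,1) there exists a finite constant C (depending only on the expansion data, Δφ, z₀ and τ*) such that for all z, z̄ with 0 < z ≤ z₀ ≤ z̄ < 1 one has ∑_{i ∈ I : τ_i ≥ τ*} p_i · g_i(z, z̄) ≤ C · z^{τ*/2} / (1−z̄)^{Δφ}. -/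
/-!
For `z ≤ z₀` and twist `τᵢ ≥ τ*`, positivity of the coefficients gives
`gᵢ(z, z̄) ≤ (z / z₀)^(τ*/2) gᵢ(z₀, z̄)`, so the high-twist part of the sum at `(z, z̄)` is at most
`(z / z₀)^(τ*/2) g(z₀, z̄)`. Crossing rewrites `g(z₀, z̄)` as
`(z₀ z̄ / ((1 - z₀)(1 - z̄)))^Δφ g(1 - z₀, 1 - z̄)`, and since every block increases in each
variable, `g(1 - z₀, 1 - z̄) ≤ g(1 - z₀, 1 - z₀)` for `z̄ ≥ z₀`, a constant.
-/

open Set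

/-- A single conformal block contribution:
`g_i(z, z̄) = (z z̄)^(τᵢ/2) ∑_{n,m} a^{(i)}_{n,m} z^n z̄^m`. -/
noncomputable def blockFun (τi : ℝ) (coef : ℕ × ℕ → ℝ) (z zb : ℝ) : ℝ :=
  (z * zb) ^ (τi / 2) * ∑' nm : ℕ × ℕ, coef nm * z ^ nm.1 * zb ^ nm.2

lemma tsum_le_tsum_of_nonneg_of_le {ι : Type*} {f g : ι → ℝ} (hf : ∀ i, 0 ≤ f i)
    (hfg : ∀ i, f i ≤ g i) (hg : Summable g) : ∑' i, f i ≤ ∑' i, g i :=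
  (hg.of_nonneg_of_le hf hfg).tsum_le_tsum hfg hg

lemma rpow_div_mul_le_div_rpow {a b u K Δ : ℝ} (ha : 0 ≤ a) (ha1 : a ≤ 1) (hb : 0 < b)
    (hΔ : 0 ≤ Δ) (hu : 0 ≤ u) (huK : u ≤ K) : (a / b) ^ Δ * u ≤ K / b ^ Δ := by
  rw [Real.div_rpow ha hb.le, div_mul_eq_mul_div]
  gcongr
  calc a ^ Δ * u ≤ 1 * K := mul_le_mul (Real.rpow_le_one ha ha1 hΔ) huK hu zero_le_one
    _ = K := one_mul K

section Block

variable {coef : ℕ × ℕ → ℝ}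

lemma blockFun_nonneg (τi : ℝ) (hcoef : ∀ nm, 0 ≤ coef nm) {z zb : ℝ} (hz : 0 ≤ z)
    (hzb : 0 ≤ zb) : 0 ≤ blockFun τi coef z zb :=
  mul_nonneg (Real.rpow_nonneg (mul_nonneg hz hzb) _)
    (tsum_nonneg fun nm => by have := hcoef nm; positivity)

lemma tsum_coef_mul_pow_mono (hcoef : ∀ nm, 0 ≤ coef nm) {z zb z' zb' : ℝ}
    (hz : 0 ≤ z) (hzz' : z ≤ z') (hzb : 0 ≤ zb) (hzbzb' : zb ≤ zb')
    (hS' : Summable fun nm : ℕ × ℕ => coef nm * z' ^ nm.1 * zb' ^ nm.2) :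
    ∑' nm : ℕ × ℕ, coef nm * z ^ nm.1 * zb ^ nm.2 ≤
      ∑' nm : ℕ × ℕ, coef nm * z' ^ nm.1 * zb' ^ nm.2 := by
  have hz' : 0 ≤ z' := hz.trans hzz'
  exact tsum_le_tsum_of_nonneg_of_le (fun nm => by have := hcoef nm; positivity)
    (fun nm => by have := hcoef nm; gcongr) hS'

lemma blockFun_mono {τi : ℝ} (hτi : 0 ≤ τi) (hcoef : ∀ nm, 0 ≤ coef nm) {z zb z' zb' : ℝ}
    (hz : 0 ≤ z) (hzz' : z ≤ z') (hzb : 0 ≤ zb) (hzbzb' : zb ≤ zb')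
    (hS' : Summable fun nm : ℕ × ℕ => coef nm * z' ^ nm.1 * zb' ^ nm.2) :
    blockFun τi coef z zb ≤ blockFun τi coef z' zb' := by
  have hz' : 0 ≤ z' := hz.trans hzz'
  have hzb' : 0 ≤ zb' := hzb.trans hzbzb'
  exact mul_le_mul
    (Real.rpow_le_rpow (mul_nonneg hz hzb) (mul_le_mul hzz' hzbzb' hzb hz') (by linarith))
    (tsum_coef_mul_pow_mono hcoef hz hzz' hzb hzbzb' hS')
    (tsum_nonneg fun nm => by have := hcoef nm; positivity)
    (Real.rpow_nonneg (mul_nonneg hz' hzb') _)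

lemma blockFun_le_rpow_mul {τi c z z₀ zb : ℝ} (hcoef : ∀ nm, 0 ≤ coef nm) (hc : c ≤ τi / 2)
    (hz : 0 < z) (hzz₀ : z ≤ z₀) (hzb : 0 ≤ zb)
    (hS : Summable fun nm : ℕ × ℕ => coef nm * z₀ ^ nm.1 * zb ^ nm.2) :
    blockFun τi coef z zb ≤ (z / z₀) ^ c * blockFun τi coef z₀ zb := by
  have hz₀ : 0 < z₀ := hz.trans_le hzz₀
  have hratio : 0 < z / z₀ := div_pos hz hz₀
  have hpow : (z * zb) ^ (τi / 2) ≤ (z / z₀) ^ c * (z₀ * zb) ^ (τi / 2) := by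
    rw [show z * zb = z / z₀ * (z₀ * zb) by field_simp, Real.mul_rpow hratio.le (by positivity)]
    exact mul_le_mul_of_nonneg_right
      (Real.rpow_le_rpow_of_exponent_ge hratio ((div_le_one hz₀).2 hzz₀) hc) (by positivity)
  rw [blockFun, blockFun, ← mul_assoc]
  exact mul_le_mul hpow (tsum_coef_mul_pow_mono hcoef hz.le hzz₀ hzb le_rfl hS)
    (tsum_nonneg fun nm => by have := hcoef nm; positivity) (by positivity)

end Block

section Family

variable {I : Type*} {p τ : I → ℝ} {coef : I → ℕ × ℕ → ℝ}

lemma tsum_mul_blockFun_mono (hp : ∀ i, 0 ≤ p i) (hτ : ∀ i, 0 ≤ τ i)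
    (hcoef : ∀ i nm, 0 ≤ coef i nm) {z zb z' zb' : ℝ}
    (hz : 0 ≤ z) (hzz' : z ≤ z') (hzb : 0 ≤ zb) (hzbzb' : zb ≤ zb')
    (hinner : ∀ i, Summable fun nm : ℕ × ℕ => coef i nm * z' ^ nm.1 * zb' ^ nm.2)
    (hS' : Summable fun i => p i * blockFun (τ i) (coef i) z' zb') :
    ∑' i, p i * blockFun (τ i) (coef i) z zb ≤ ∑' i, p i * blockFun (τ i) (coef i) z' zb' :=
  tsum_le_tsum_of_nonneg_of_le (fun i => mul_nonneg (hp i) (blockFun_nonneg _ (hcoef i) hz hzb))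
    (fun i => mul_le_mul_of_nonneg_left
      (blockFun_mono (hτ i) (hcoef i) hz hzz' hzb hzbzb' (hinner i)) (hp i)) hS'

lemma tsum_subtype_mul_blockFun_le (hp : ∀ i, 0 ≤ p i) (hcoef : ∀ i nm, 0 ≤ coef i nm)
    (τstar : ℝ) {z z₀ zb : ℝ} (hz : 0 < z) (hzz₀ : z ≤ z₀) (hzb : 0 ≤ zb)
    (hinner : ∀ i, Summable fun nm : ℕ × ℕ => coef i nm * z₀ ^ nm.1 * zb ^ nm.2)
    (hS : Summable fun i => p i * blockFun (τ i) (coef i) z₀ zb) :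
    ∑' i : {j : I // τstar ≤ τ j}, p i.1 * blockFun (τ i.1) (coef i.1) z zb ≤
      (z / z₀) ^ (τstar / 2) * ∑' i, p i * blockFun (τ i) (coef i) z₀ zb := by
  set r := (z / z₀) ^ (τstar / 2)
  have hz₀ : 0 < z₀ := hz.trans_le hzz₀
  have hterm : ∀ i : {j : I // τstar ≤ τ j},
      p i.1 * blockFun (τ i.1) (coef i.1) z zb ≤
        r * (p i.1 * blockFun (τ i.1) (coef i.1) z₀ zb) := by
    rintro ⟨i, hi⟩
    rw [mul_left_comm]
    exact mul_le_mul_of_nonneg_left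
      (blockFun_le_rpow_mul (hcoef i) (by linarith) hz hzz₀ hzb (hinner i)) (hp i)
  have hnonneg : ∀ i, 0 ≤ p i * blockFun (τ i) (coef i) z₀ zb :=
    fun i => mul_nonneg (hp i) (blockFun_nonneg _ (hcoef i) hz₀.le hzb)
  calc ∑' i : {j : I // τstar ≤ τ j}, p i.1 * blockFun (τ i.1) (coef i.1) z zb
      ≤ ∑' i : {j : I // τstar ≤ τ j}, r * (p i.1 * blockFun (τ i.1) (coef i.1) z₀ zb) :=
        tsum_le_tsum_of_nonneg_of_le
          (fun i => mul_nonneg (hp i.1) (blockFun_nonneg _ (hcoef i.1) hz.le hzb)) hterm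
          ((hS.subtype _).mul_left r)
    _ = r * ∑' i : {j : I // τstar ≤ τ j}, p i.1 * blockFun (τ i.1) (coef i.1) z₀ zb :=
        tsum_mul_left
    _ ≤ r * ∑' i, p i * blockFun (τ i) (coef i) z₀ zb := by
        gcongr
        exact hS.tsum_subtype_le _ {j | τstar ≤ τ j} hnonneg

lemma one_add_tsum_mul_blockFun_le_of_crossing {Δφ : ℝ} (hΔ : 0 ≤ Δφ) (hp : ∀ i, 0 ≤ p i)
    (hτ : ∀ i, 0 ≤ τ i) (hcoef : ∀ i nm, 0 ≤ coef i nm) {z₀ zb : ℝ} (hz₀ : 0 < z₀)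
    (hz₀zb : z₀ ≤ zb) (hzb : zb < 1)
    (hinner : ∀ i, Summable fun nm : ℕ × ℕ => coef i nm * (1 - z₀) ^ nm.1 * (1 - z₀) ^ nm.2)
    (hS : Summable fun i => p i * blockFun (τ i) (coef i) (1 - z₀) (1 - z₀))
    (hcross : 1 + ∑' i, p i * blockFun (τ i) (coef i) z₀ zb =
      (z₀ * zb / ((1 - z₀) * (1 - zb))) ^ Δφ *
        (1 + ∑' i, p i * blockFun (τ i) (coef i) (1 - z₀) (1 - zb))) :
    1 + ∑' i, p i * blockFun (τ i) (coef i) z₀ zb ≤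
      (1 + ∑' i, p i * blockFun (τ i) (coef i) (1 - z₀) (1 - z₀)) /
        ((1 - z₀) * (1 - zb)) ^ Δφ := by
  have hdual_nonneg : 0 ≤ 1 + ∑' i, p i * blockFun (τ i) (coef i) (1 - z₀) (1 - zb) :=
    add_nonneg zero_le_one <| tsum_nonneg fun i =>
      mul_nonneg (hp i) (blockFun_nonneg _ (hcoef i) (by linarith) (by linarith))
  have hdual_le := tsum_mul_blockFun_mono hp hτ hcoef (by linarith) le_rfl (by linarith)
    (by linarith : 1 - zb ≤ 1 - z₀) hinner hS
  rw [hcross]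
  exact rpow_div_mul_le_div_rpow (mul_nonneg hz₀.le (by linarith))
    (mul_le_one₀ (by linarith) (by linarith) hzb.le) (mul_pos (by linarith) (by linarith)) hΔ
    hdual_nonneg (by linarith)

end Family

theorem stmt2_general {I : Type*} [Countable I] (Δφ : ℝ) (hΔ : 0 < Δφ)
    (p τ : I → ℝ) (coef : I → ℕ × ℕ → ℝ)
    (hp : ∀ i, 0 ≤ p i) (hτ : ∀ i, 0 ≤ τ i) (hcoef : ∀ i nm, 0 ≤ coef i nm)
    (hinner : ∀ i, ∀ z zb : ℝ, 0 ≤ z → z < 1 → 0 ≤ zb → zb < 1 →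
      Summable (fun nm : ℕ × ℕ => coef i nm * z ^ nm.1 * zb ^ nm.2))
    (hsum : ∀ z zb : ℝ, z ∈ Ioo (0:ℝ) 1 → zb ∈ Ioo (0:ℝ) 1 →
      Summable (fun i => p i * blockFun (τ i) (coef i) z zb))
    (hcross : ∀ z zb : ℝ, z ∈ Ioo (0:ℝ) 1 → zb ∈ Ioo (0:ℝ) 1 →
      1 + ∑' i, p i * blockFun (τ i) (coef i) z zb =
        (z * zb / ((1 - z) * (1 - zb))) ^ Δφ *
          (1 + ∑' i, p i * blockFun (τ i) (coef i) (1 - z) (1 - zb)))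
    (τstar : ℝ) (z₀ : ℝ) (hz₀ : z₀ ∈ Ioo (0:ℝ) 1) :
    ∃ C : ℝ, ∀ z zb : ℝ, 0 < z → z ≤ z₀ → z₀ ≤ zb → zb < 1 →
      (∑' i : {j : I // τstar ≤ τ j}, p i.1 * blockFun (τ i.1) (coef i.1) z zb) ≤
        C * z ^ (τstar / 2) / (1 - zb) ^ Δφ := by
  have ⟨hz₀0, hz₀1⟩ := hz₀
  set K := 1 + ∑' i, p i * blockFun (τ i) (coef i) (1 - z₀) (1 - z₀)
  refine ⟨K / (z₀ ^ (τstar / 2) * (1 - z₀) ^ Δφ), fun z zb hz hzz₀ hz₀zb hzb1 => ?_⟩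
  have hzb0 : 0 < zb := hz₀0.trans_le hz₀zb
  have hzb' : zb ∈ Ioo (0:ℝ) 1 := ⟨hzb0, hzb1⟩
  have h1z₀ : 1 - z₀ ∈ Ioo (0:ℝ) 1 := ⟨by linarith, by linarith⟩
  calc (∑' i : {j : I // τstar ≤ τ j}, p i.1 * blockFun (τ i.1) (coef i.1) z zb)
      ≤ (z / z₀) ^ (τstar / 2) * ∑' i, p i * blockFun (τ i) (coef i) z₀ zb :=
        tsum_subtype_mul_blockFun_le hp hcoef τstar hz hzz₀ hzb0.le
          (fun i => hinner i _ _ hz₀0.le hz₀1 hzb0.le hzb1) (hsum _ _ hz₀ hzb')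
    _ ≤ (z / z₀) ^ (τstar / 2) * (1 + ∑' i, p i * blockFun (τ i) (coef i) z₀ zb) := by
        gcongr
        exact le_add_of_nonneg_left zero_le_one
    _ ≤ (z / z₀) ^ (τstar / 2) * (K / ((1 - z₀) * (1 - zb)) ^ Δφ) := by
        gcongr
        exact one_add_tsum_mul_blockFun_le_of_crossing hΔ.le hp hτ hcoef hz₀0 hz₀zb hzb1
          (fun i => hinner i _ _ h1z₀.1.le h1z₀.2 h1z₀.1.le h1z₀.2) (hsum _ _ h1z₀ h1z₀)
          (hcross z₀ zb hz₀ hzb')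
    _ = K / (z₀ ^ (τstar / 2) * (1 - z₀) ^ Δφ) * z ^ (τstar / 2) / (1 - zb) ^ Δφ := by
        rw [Real.div_rpow hz.le hz₀0.le, Real.mul_rpow (by linarith) (by linarith)]
        have : 0 < (1 - z₀) ^ Δφ := Real.rpow_pos_of_pos (by linarith) _
        have : 0 < (1 - zb) ^ Δφ := Real.rpow_pos_of_pos (by linarith) _
        have : 0 < z₀ ^ (τstar / 2) := Real.rpow_pos_of_pos hz₀0 _
        field_simp

/-- direct-channel bound on the total contribution of twists `τ ≥ τ*`:
`∑_{τᵢ ≥ τ*} pᵢ gᵢ(z, z̄) ≤ C z^(τ*/2) / (1 - z̄)^Δφ` for `0 < z ≤ z₀ ≤ z̄ < 1`. -/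
theorem stmt2 {I : Type*} [Countable I] (Δφ : ℝ) (hΔ : 0 < Δφ)
    (p τ : I → ℝ) (coef : I → ℕ × ℕ → ℝ)
    (hp : ∀ i, 0 ≤ p i) (hτ : ∀ i, 0 ≤ τ i) (hcoef : ∀ i nm, 0 ≤ coef i nm)
    (hinner : ∀ i, ∀ z zb : ℝ, 0 ≤ z → z < 1 → 0 ≤ zb → zb < 1 →
      Summable (fun nm : ℕ × ℕ => coef i nm * z ^ nm.1 * zb ^ nm.2))
    (hsum : ∀ z zb : ℝ, z ∈ Ioo (0:ℝ) 1 → zb ∈ Ioo (0:ℝ) 1 →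
      Summable (fun i => p i * blockFun (τ i) (coef i) z zb))
    (hcross : ∀ z zb : ℝ, z ∈ Ioo (0:ℝ) 1 → zb ∈ Ioo (0:ℝ) 1 →
      1 + ∑' i, p i * blockFun (τ i) (coef i) z zb =
        (z * zb / ((1 - z) * (1 - zb))) ^ Δφ *
          (1 + ∑' i, p i * blockFun (τ i) (coef i) (1 - z) (1 - zb)))
    (τstar : ℝ) (hτstar : 0 ≤ τstar) (z₀ : ℝ) (hz₀ : z₀ ∈ Ioo (0:ℝ) 1) :
    ∃ C : ℝ, ∀ z zb : ℝ, 0 < z → z ≤ z₀ → z₀ ≤ zb → zb < 1 →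
      (∑' i : {j : I // τstar ≤ τ j}, p i.1 * blockFun (τ i.1) (coef i.1) z zb) ≤
        C * z ^ (τstar / 2) / (1 - zb) ^ Δφ :=
  stmt2_general Δφ hΔ p τ coef hp hτ hcoef hinner hsum hcross τstar z₀ hz₀
end

section
/- Let Δφ > 0 and 0 < τ_gap ≤ 2Δφ. Let (z_n) and (z̄_n) be sequences in (0,1) with z_n → 0, z̄_n → 1, and z_n^{τ_gap/2} / (1−z̄_n)^{Δφ} → 0. Then (z_n/(1−z̄_n))^{Δφ} · (1−z̄_n)^{τ_gap/2} · log(1/z_n) → 0 as n → ∞. -/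
open Set Filter

/-- computational core of Lemma 2.5: in the DLC* limit
(`z → 0`, `z̄ → 1`, `z^(τ_gap/2)/(1-z̄)^Δφ → 0`), the quantity
`(z/(1-z̄))^Δφ (1-z̄)^(τ_gap/2) log(1/z)` tends to `0`. -/
theorem stmt5 (Δφ τgap : ℝ) (hΔ : 0 < Δφ) (hgap : 0 < τgap) (hle : τgap ≤ 2 * Δφ)
    (z zb : ℕ → ℝ) (hz : ∀ n, z n ∈ Ioo (0:ℝ) 1) (hzb : ∀ n, zb n ∈ Ioo (0:ℝ) 1)
    (hz0 : Tendsto z atTop (nhds 0))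
    (hzb1 : Tendsto zb atTop (nhds 1))
    (hdlc : Tendsto (fun n => z n ^ (τgap / 2) / (1 - zb n) ^ Δφ) atTop (nhds 0)) :
    Tendsto
      (fun n => (z n / (1 - zb n)) ^ Δφ * (1 - zb n) ^ (τgap / 2) * Real.log (1 / z n))
      atTop (nhds 0) := by
  set θ : ℝ := 1 - τgap / (2 * Δφ) with hθdef
  set c : ℝ := Δφ - θ * (τgap / 2) with hcdef
  have hθ0 : 0 ≤ θ := by
    rw [hθdef, sub_nonneg, div_le_one (by linarith)]
    linarith
  have hc : 0 < c := by
    rw [hcdef, hθdef, sub_pos]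
    have key : (1 - τgap / (2 * Δφ)) * (τgap / 2)
        = τgap / 2 - τgap ^ 2 / (4 * Δφ) := by
      field_simp; ring
    rw [key]
    have h1 : 0 < τgap ^ 2 / (4 * Δφ) := by positivity
    linarith
  -- the tail factor z^c * log(1/z) → 0
  have hg : Tendsto (fun n => z n ^ c * Real.log (1 / z n)) atTop (nhds 0) := by
    have hwithin : Tendsto z atTop (nhdsWithin 0 (Ioi 0)) :=
      tendsto_nhdsWithin_of_tendsto_nhds_of_eventually_within z hz0
        (Eventually.of_forall fun n => (hz n).1)
    have h := (tendsto_log_mul_rpow_nhdsGT_zero hc).comp hwithin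
    have h2 : Tendsto (fun n => -(Real.log (z n) * z n ^ c)) atTop (nhds 0) := by
      simpa using h.neg
    refine h2.congr fun n => ?_
    rw [Real.log_div one_ne_zero (ne_of_gt (hz n).1), Real.log_one]
    ring
  -- eventually the original quantity is squeezed between 0 and z^c * log(1/z)
  have hA1 : ∀ᶠ n in atTop, z n ^ (τgap / 2) / (1 - zb n) ^ Δφ ≤ 1 :=
    hdlc.eventually (eventually_le_nhds one_pos)
  refine squeeze_zero' ?_ ?_ hg
  · filter_upwards with n
    have h1 : (0:ℝ) < z n := (hz n).1
    have h2 : (0:ℝ) < 1 - zb n := by have := (hzb n).2; linarith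
    have hlog : 0 ≤ Real.log (1 / z n) := by
      apply Real.log_nonneg
      rw [le_div_iff₀ h1]; linarith [(hz n).2]
    positivity
  · filter_upwards [hA1] with n hA
    have h1 : (0:ℝ) < z n := (hz n).1
    have h2 : (0:ℝ) < 1 - zb n := by have := (hzb n).2; linarith
    have hlog : 0 ≤ Real.log (1 / z n) := by
      apply Real.log_nonneg
      rw [le_div_iff₀ h1]; linarith [(hz n).2]
    have hApos : (0:ℝ) < z n ^ (τgap / 2) / (1 - zb n) ^ Δφ := by positivity
    -- key identity
    have hid : (z n / (1 - zb n)) ^ Δφ * (1 - zb n) ^ (τgap / 2)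
        = (z n ^ (τgap / 2) / (1 - zb n) ^ Δφ) ^ θ * z n ^ c := by
      have lA : Real.log (z n ^ (τgap / 2) / (1 - zb n) ^ Δφ)
          = Real.log (z n) * (τgap / 2) - Real.log (1 - zb n) * Δφ := by
        rw [Real.log_div (by positivity) (by positivity),
          Real.log_rpow h1, Real.log_rpow h2]
        ring
      rw [Real.rpow_def_of_pos (div_pos h1 h2), Real.rpow_def_of_pos h2,
        Real.rpow_def_of_pos hApos, lA,
        Real.log_div (ne_of_gt h1) (ne_of_gt h2),
        Real.rpow_def_of_pos h1, ← Real.exp_add, ← Real.exp_add]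
      congr 1
      rw [hcdef, hθdef]
      field_simp
      ring
    have hApow : (z n ^ (τgap / 2) / (1 - zb n) ^ Δφ) ^ θ ≤ 1 :=
      Real.rpow_le_one (le_of_lt hApos) hA hθ0
    calc (z n / (1 - zb n)) ^ Δφ * (1 - zb n) ^ (τgap / 2) * Real.log (1 / z n)
        = (z n ^ (τgap / 2) / (1 - zb n) ^ Δφ) ^ θ * (z n ^ c * Real.log (1 / z n)) := by
          rw [hid]; ring
      _ ≤ 1 * (z n ^ c * Real.log (1 / z n)) := by
          apply mul_le_mul_of_nonneg_right hApow
          positivity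
      _ = z n ^ c * Real.log (1 / z n) := one_mul _
end
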